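/- Let T be a spanning tree of the telescope graph Tele_n(k_0,...,k_n). Then T is a single-step tree (it contains exactly one of the edges f, g and a path from x to s avoiding c) if and only if T contains exactly one edge from each of the pairs {f,g}, {e_i, ê_i} for i in [1,n], and {h_i^j, ĥ_i^j} for all valid i,j. In particular, the complement E(G) \ T of every single-step tree is again a spanning tree. -/

import Mathlib

open Finset

noncomputable section
open scoped Classical

/-- A finite multigraph without loops: each edge has an unordered pair of
distinct endpoints. -/
structure Multigraph (V E : Type) where
  ends : E → Sym2 V
  loopless : ∀ e, ¬ (ends e).IsDiag

/-- A ribbon structure: for each vertex, a "next edge" map describing the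
cyclic ordering of the edges incident to that vertex. -/
structure RibbonStruct (V E : Type) where
  next : V → E → E

/-- The group of degree-zero divisors on the vertex set `V`. -/
def Div0 (V : Type) [Fintype V] : AddSubgroup (V → ℤ) where
  carrier := {D | ∑ v, D v = 0}
  add_mem' := by
    intro a b ha hb
    simp only [Set.mem_setOf_eq, Pi.add_apply, Finset.sum_add_distrib] at *
    omega
  zero_mem' := by simp
  neg_mem' := by
    intro a ha
    simp only [Set.mem_setOf_eq, Pi.neg_apply, Finset.sum_neg_distrib] at *
    omega

/-- The divisor `c - s`. -/
def chipDiv {V : Type} [DecidableEq V] (c s : V) : V → ℤ :=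
  fun v => (if v = c then 1 else 0) - (if v = s then 1 else 0)

namespace Multigraph

variable {V E : Type} [Fintype V] [Fintype E] [DecidableEq V] [DecidableEq E]

/-- Two vertices are adjacent if they are the two endpoints of some edge. -/
def Adj (G : Multigraph V E) (x y : V) : Prop := ∃ e : E, G.ends e = s(x, y)

/-- A multigraph is connected if any two vertices are joined by a walk. -/
def Connected (G : Multigraph V E) : Prop := ∀ x y : V, Relation.ReflTransGen G.Adj x y

/-- Adjacency using only edges from the set `T`. -/
def AdjOn (G : Multigraph V E) (T : Finset E) (x y : V) : Prop := ∃ e ∈ T, G.ends e = s(x, y)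

/-- Reachability using only edges from the set `T`. -/
def ReachOn (G : Multigraph V E) (T : Finset E) (x y : V) : Prop :=
  Relation.ReflTransGen (G.AdjOn T) x y

/-- A spanning tree: a spanning connected edge set of the correct cardinality. -/
def IsSpanningTree (G : Multigraph V E) (T : Finset E) : Prop :=
  (∀ x y : V, G.ReachOn T x y) ∧ T.card = Fintype.card V - 1

/-- The degree of a vertex: the number of incident edges. -/
def degree (G : Multigraph V E) (v : V) : ℕ := (univ.filter fun e => v ∈ G.ends e).card

/-- The number of edges of `T` incident to `v`. -/
def treeDegree (G : Multigraph V E) (T : Finset E) (v : V) : ℕ :=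
  (T.filter fun e => v ∈ G.ends e).card

/-- A leaf vertex of `T`: incident to exactly one edge of `T`. -/
def IsLeafVertex (G : Multigraph V E) (T : Finset E) (v : V) : Prop := G.treeDegree T v = 1

/-- A leaf edge of `T`: an edge of `T` incident to a leaf vertex. -/
def IsLeafEdge (G : Multigraph V E) (T : Finset E) (e : E) : Prop :=
  e ∈ T ∧ ∃ v, v ∈ G.ends e ∧ G.IsLeafVertex T v

/-- Adjacency within `T` avoiding the vertex `x`. -/
def AdjOnAvoid (G : Multigraph V E) (T : Finset E) (x : V) (a b : V) : Prop :=
  G.AdjOn T a b ∧ a ≠ x ∧ b ≠ x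

/-- "The path in `T` from `a` to `r` passes through `y`": `a` cannot reach `r`
within `T` while avoiding the vertex `y`. -/
def PathThrough (G : Multigraph V E) (T : Finset E) (r a y : V) : Prop :=
  ¬ Relation.ReflTransGen (G.AdjOnAvoid T y) a r

/-- Adjacency in `G` avoiding the vertex `x`. -/
def AdjAvoid (G : Multigraph V E) (x : V) (a b : V) : Prop := G.Adj a b ∧ a ≠ x ∧ b ≠ x

/-- 2-connected: connected and with no cut vertices. -/
def TwoConnected (G : Multigraph V E) : Prop :=
  G.Connected ∧ ∀ x a b : V, a ≠ x → b ≠ x →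
    Relation.ReflTransGen (G.AdjAvoid x) a b

/-- The row of the Laplacian matrix of `G` corresponding to the vertex `v`
(the divisor obtained by "firing" the vertex `v`, negated). -/
def lapRow (G : Multigraph V E) (v : V) : V → ℤ := fun w =>
  if w = v then (G.degree v : ℤ) else -((univ.filter fun e => G.ends e = s(v, w)).card : ℤ)

/-- The subgroup of divisors generated by the rows of the Laplacian, i.e. the
integer image of the Laplacian. -/
def LapSubgroup (G : Multigraph V E) : AddSubgroup (V → ℤ) :=
  AddSubgroup.closure (Set.range G.lapRow)

/-- Two divisors are firing equivalent when their difference lies in the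
integer image of the Laplacian. -/
def FiringEquiv (G : Multigraph V E) (D D' : V → ℤ) : Prop := D - D' ∈ G.LapSubgroup

/-- The sandpile group (Picard group) `Pic⁰(G)`:
degree-zero divisors modulo the image of the Laplacian. -/
def Pic0 (G : Multigraph V E) : Type :=
  Div0 V ⧸ ((G.LapSubgroup).addSubgroupOf (Div0 V))

instance (G : Multigraph V E) : AddCommGroup G.Pic0 :=
  QuotientAddGroup.Quotient.addCommGroup _

/-- The class in `Pic⁰(G)` of a degree-zero divisor. -/
def picClass (G : Multigraph V E) (D : V → ℤ) (hD : D ∈ Div0 V) : G.Pic0 :=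
  QuotientAddGroup.mk ⟨D, hD⟩

/-- `cfg` is the rotor configuration of the tree `T` with sink `s` (each
non-sink vertex carries the first edge of `T` on its path to `s`). -/
def IsRotorCfg (G : Multigraph V E) (s : V) (T : Finset E) (cfg : V → E) : Prop :=
  ∀ v, v ≠ s → cfg v ∈ T ∧ v ∈ G.ends (cfg v) ∧ ¬ G.ReachOn (T.erase (cfg v)) v s

/-- One step along the rotors of `cfg` (with sink `s`):
from `a ≠ s` across the rotor at `a` to its other endpoint `b`. -/
def RotorStep (G : Multigraph V E) (s : V) (cfg : V → E) (a b : V) : Prop :=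
  a ≠ s ∧ G.ends (cfg a) = s(a, b)

/-- A rotor configuration is acyclic: following rotors never returns to a
starting vertex. -/
def RotorAcyclic (G : Multigraph V E) (s : V) (cfg : V → E) : Prop :=
  ∀ a : V, ¬ Relation.TransGen (G.RotorStep s cfg) a a

/-- One step of the single-chip rotor-routing process: the state is a pair
(rotor configuration, chip position); the rotor at the chip's position is
rotated one step in the cyclic order `χ`, and the chip then moves across the
new rotor. -/
def RRStep (G : Multigraph V E) (χ : RibbonStruct V E) (p q : (V → E) × V) : Prop :=
  q.1 = Function.update p.1 p.2 (χ.next p.2 (p.1 p.2)) ∧ G.ends (q.1 p.2) = s(p.2, q.2)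

/-- A run of length `n` of the rotor-routing algorithm with sink `s`. -/
def IsRun (G : Multigraph V E) (χ : RibbonStruct V E) (s : V)
    (σ : ℕ → (V → E) × V) (n : ℕ) : Prop :=
  ∀ i, i < n → (σ i).2 ≠ s ∧ G.RRStep χ (σ i) (σ i.succ)

/-- At step `i` of the run `σ`, the chip crosses the edge `e` from `u` to `w`. -/
def Crosses (G : Multigraph V E) (σ : ℕ → (V → E) × V) (i : ℕ) (e : E) (u w : V) : Prop :=
  (σ i).2 = u ∧ (σ (i + 1)).2 = w ∧ (σ (i + 1)).1 u = e ∧ G.ends e = s(u, w)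

/-- A dart of `G`: an edge together with a chosen head. -/
def Dart (G : Multigraph V E) : Type := {p : E × V // p.2 ∈ G.ends p.1}

/-- The "next dart along a face" relation determined by the ribbon structure. -/
def FaceRel (G : Multigraph V E) (χ : RibbonStruct V E) (a b : G.Dart) : Prop :=
  b.1.1 = χ.next a.1.2 a.1.1 ∧ G.ends b.1.1 = s(a.1.2, b.1.2)

/-- The number of faces of the ribbon graph `(G, χ)`: the number of orbits of
the face map on darts. -/
def numFaces (G : Multigraph V E) (χ : RibbonStruct V E) : ℕ :=
  Nat.card (Quot (G.FaceRel χ))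

end Multigraph

/-- The axioms making `χ` an honest ribbon structure on `G`: at each vertex,
`next` is a bijection preserving the incident edges and acting transitively
(i.e. cyclically) on them. -/
def RibbonStruct.IsRibbon {V E : Type} [Fintype V] [Fintype E]
    (χ : RibbonStruct V E) (G : Multigraph V E) : Prop :=
  (∀ v : V, Function.Bijective (χ.next v)) ∧
  (∀ v e, v ∈ G.ends e → v ∈ G.ends (χ.next v e)) ∧
  (∀ v e f, v ∈ G.ends e → v ∈ G.ends f → ∃ m : ℕ, (χ.next v)^[m] e = f)

/-- A plane graph: a connected ribbon graph of genus 0 (Euler's formula). -/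
def Multigraph.IsPlane {V E : Type} [Fintype V] [Fintype E] [DecidableEq V] [DecidableEq E]
    (G : Multigraph V E) (χ : RibbonStruct V E) : Prop :=
  G.Connected ∧ χ.IsRibbon G ∧
    Fintype.card V + G.numFaces χ = Fintype.card E + 2

/-- An isomorphism of ribbon graphs: a pair of bijections on vertices and
edges preserving incidence and the cyclic orderings. -/
def IsRibbonIso {V E V' E' : Type}
    (G : Multigraph V E) (χ : RibbonStruct V E)
    (G' : Multigraph V' E') (χ' : RibbonStruct V' E')
    (φV : V ≃ V') (φE : E ≃ E') : Prop :=
  (∀ e, G'.ends (φE e) = (G.ends e).map φV) ∧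
  ∀ v e, v ∈ G.ends e → φE (χ.next v e) = χ'.next (φV v) (φE e)


/-- The vertices of the telescope graph: the apex `c`, the spine vertices
`z_0, …, z_n`, and for each `i` the `k i` extra degree-2 vertices `w i j`. -/
abbrev TeleV (n : ℕ) (k : Fin (n + 1) → ℕ) : Type :=
  Unit ⊕ Fin (n + 1) ⊕ (Σ i : Fin (n + 1), Fin (k i))

/-- The edges of the telescope graph: `g` (= `inl false`), `f` (= `inl true`),
the parallel pairs `e_i, ê_i` along the spine, and the pairs `h i j, ĥ i j`
through the degree-2 vertices. -/
abbrev TeleE (n : ℕ) (k : Fin (n + 1) → ℕ) : Type :=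
  Bool ⊕ (Fin n × Bool) ⊕ ((Σ i : Fin (n + 1), Fin (k i)) × Bool)

def teleC {n : ℕ} {k : Fin (n + 1) → ℕ} : TeleV n k := Sum.inl ()
def teleZ {n : ℕ} {k : Fin (n + 1) → ℕ} (i : Fin (n + 1)) : TeleV n k := Sum.inr (Sum.inl i)
def teleW {n : ℕ} {k : Fin (n + 1) → ℕ} (i : Fin (n + 1)) (j : Fin (k i)) : TeleV n k :=
  Sum.inr (Sum.inr ⟨i, j⟩)

def teleG {n : ℕ} {k : Fin (n + 1) → ℕ} : TeleE n k := Sum.inl false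
def teleF {n : ℕ} {k : Fin (n + 1) → ℕ} : TeleE n k := Sum.inl true
def teleEdge {n : ℕ} {k : Fin (n + 1) → ℕ} (i : Fin n) (b : Bool) : TeleE n k :=
  Sum.inr (Sum.inl (i, b))
def teleH {n : ℕ} {k : Fin (n + 1) → ℕ} (i : Fin (n + 1)) (j : Fin (k i)) (b : Bool) :
    TeleE n k := Sum.inr (Sum.inr (⟨i, j⟩, b))

/-- The telescope graph `Tele_n(k_0, …, k_n)`: `g` joins `c` to `z_0`, `f`
joins `c` to `z_n`, a pair of parallel edges joins `z_{i-1}` to `z_i` for each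
`i`, and each `w i j` is joined to both `z_i` and `c`. -/
def teleGraph (n : ℕ) (k : Fin (n + 1) → ℕ) : Multigraph (TeleV n k) (TeleE n k) where
  ends := fun e =>
    match e with
    | Sum.inl b => if b then s(teleC, teleZ (Fin.last n)) else s(teleC, teleZ 0)
    | Sum.inr (Sum.inl (i, _)) => s(teleZ i.castSucc, teleZ i.succ)
    | Sum.inr (Sum.inr (⟨i, j⟩, b)) => if b then s(teleW i j, teleC) else s(teleW i j, teleZ i)
  loopless := by
    rintro (b | ⟨i, b⟩ | ⟨⟨i, j⟩, b⟩) h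
    · cases b <;> simp [teleC, teleZ, Sym2.mk_isDiag_iff] at h
    · simp only [teleZ, Sym2.mk_isDiag_iff, Sum.inr.injEq, Sum.inl.injEq] at h
      exact (Fin.castSucc_lt_succ (i := i)).ne h
    · cases b <;> simp [teleW, teleC, teleZ, Sym2.mk_isDiag_iff] at h

/-- A single-step tree with respect to the distinguished data `(c, x, s, f, g)`:
a spanning tree containing exactly one of `f` and `g` together with a path
from `x` to `s` avoiding `c` (so that `(c-s, ·)` is a single-step pair or
`(s-c, ·)` a reverse single-step pair of the rotor-routing algorithm). -/
def SingleStepTree {V E : Type} [Fintype V] [Fintype E] [DecidableEq V] [DecidableEq E]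
    (G : Multigraph V E) (c x s : V) (f g : E) (T : Finset E) : Prop :=
  Xor' (f ∈ T) (g ∈ T) ∧ Relation.ReflTransGen (G.AdjOnAvoid T c) x s

/-!
The edges of `Tele_n(k_0, …, k_n)` fall into the pairs `{f, g}`, `{e_i, ê_i}` and
`{h_i^j, ĥ_i^j}`, and there are exactly `|V| - 1` of them. A spanning tree has `|V| - 1` edges,
so it contains exactly one edge of every pair as soon as it meets every pair. A single-step tree
meets `{f, g}` by definition, meets `{e_i, ê_i}` because `c` together with `e_i, ê_i` separates
`z_0` from `z_n`, and meets `{h_i^j, ĥ_i^j}` because these are the only edges at `w_i^j`.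
Conversely, an edge set meeting every pair contains a spine path avoiding `c` and joins every
vertex to the spine; as the complement of a set with one edge per pair again has one edge per
pair, such a set and its complement are spanning trees.
-/

namespace Multigraph

variable {V E : Type} {G : Multigraph V E} {T : Finset E} {a b : V}

instance : Std.Symm (G.AdjOn T) where
  symm _ _ := fun ⟨e, he, hab⟩ => ⟨e, he, hab.trans Sym2.eq_swap⟩

theorem ReachOn.symm (h : G.ReachOn T a b) : G.ReachOn T b a :=
  Std.Symm.symm (r := Relation.ReflTransGen (G.AdjOn T)) _ _ h

theorem ReachOn.of_adjOnAvoid {c : V} (h : Relation.ReflTransGen (G.AdjOnAvoid T c) a b) :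
    G.ReachOn T a b :=
  Relation.ReflTransGen.mono (p := G.AdjOn T) (fun _ _ hab => hab.1) _ _ h

theorem ReachOn.exists_mem_ends (h : G.ReachOn T a b) (hab : a ≠ b) :
    ∃ e ∈ T, a ∈ G.ends e := by
  rcases h.cases_head with rfl | ⟨_, ⟨e, he, hends⟩, _⟩
  · exact absurd rfl hab
  · exact ⟨e, he, hends ▸ Sym2.mem_mk_left _ _⟩

end Multigraph

namespace Telescope

open Multigraph

variable {n : ℕ} {k : Fin (n + 1) → ℕ} {S : Finset (TeleE n k)}

@[simp] theorem teleZ_ne_teleC (i : Fin (n + 1)) : (teleZ i : TeleV n k) ≠ teleC := by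
  simp [teleC, teleZ]

@[simp] theorem teleW_ne_teleC (i : Fin (n + 1)) (j : Fin (k i)) :
    (teleW i j : TeleV n k) ≠ teleC := by
  simp [teleC, teleW]

@[simp] theorem ends_teleF : (teleGraph n k).ends teleF = s(teleC, teleZ (Fin.last n)) := rfl

@[simp] theorem ends_teleG : (teleGraph n k).ends teleG = s(teleC, teleZ 0) := rfl

@[simp] theorem ends_teleEdge (i : Fin n) (b : Bool) :
    (teleGraph n k).ends (teleEdge i b) = s(teleZ i.castSucc, teleZ i.succ) := rfl

@[simp] theorem ends_teleH_false (i : Fin (n + 1)) (j : Fin (k i)) :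
    (teleGraph n k).ends (teleH i j false) = s(teleW i j, teleZ i) := rfl

@[simp] theorem ends_teleH_true (i : Fin (n + 1)) (j : Fin (k i)) :
    (teleGraph n k).ends (teleH i j true) = s(teleW i j, teleC) := rfl

abbrev TelePair (n : ℕ) (k : Fin (n + 1) → ℕ) : Type :=
  Unit ⊕ Fin n ⊕ (Σ i : Fin (n + 1), Fin (k i))

/-- The `false` edge of a pair is `g`, `e_i` or `h_i^j`, the `true` edge `f`, `ê_i` or `ĥ_i^j`. -/
def pairEquiv : TeleE n k ≃ TelePair n k × Bool where
  toFun
    | .inl b => (.inl (), b)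
    | .inr (.inl (i, b)) => (.inr (.inl i), b)
    | .inr (.inr (p, b)) => (.inr (.inr p), b)
  invFun
    | (.inl _, b) => .inl b
    | (.inr (.inl i), b) => .inr (.inl (i, b))
    | (.inr (.inr p), b) => .inr (.inr (p, b))
  left_inv := by rintro (_ | ⟨_, _⟩ | ⟨_, _⟩) <;> rfl
  right_inv := by rintro ⟨_ | _ | _, _⟩ <;> rfl

def pairOf (e : TeleE n k) : TelePair n k := (pairEquiv e).1

def pairEdge (q : TelePair n k) (b : Bool) : TeleE n k := pairEquiv.symm (q, b)

@[simp] theorem pairOf_pairEdge (q : TelePair n k) (b : Bool) : pairOf (pairEdge q b) = q := by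
  simp [pairOf, pairEdge]

@[simp] theorem pairEdge_inj {q : TelePair n k} {b b' : Bool} :
    pairEdge q b = pairEdge q b' ↔ b = b' := by
  simp [pairEdge]

theorem card_teleV : Fintype.card (TeleV n k) = Fintype.card (TelePair n k) + 1 := by
  simp only [Fintype.card_sum, Fintype.card_unit, Fintype.card_fin]
  omega

def MeetsPairs (S : Finset (TeleE n k)) : Prop := ∀ q, ∃ b, pairEdge q b ∈ S

def OnePerPair (S : Finset (TeleE n k)) : Prop :=
  ∀ q, Xor (pairEdge q false ∈ S) (pairEdge q true ∈ S)

theorem onePerPair_iff : OnePerPair S ↔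
    Xor (teleF ∈ S) (teleG ∈ S) ∧
      (∀ i : Fin n, Xor (teleEdge i false ∈ S) (teleEdge i true ∈ S)) ∧
      ∀ (i : Fin (n + 1)) (j : Fin (k i)),
        Xor (teleH i j false ∈ S) (teleH i j true ∈ S) := by
  constructor
  · intro h
    exact ⟨xor_comm _ _ ▸ h (.inl ()), fun i => h (.inr (.inl i)),
      fun i j => h (.inr (.inr ⟨i, j⟩))⟩
  · rintro ⟨hfg, he, hh⟩ (⟨⟩ | i | ⟨i, j⟩)
    exacts [xor_comm _ _ ▸ hfg, he i, hh i j]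

theorem onePerPair_iff_meetsPairs_and_injOn :
    OnePerPair S ↔ MeetsPairs S ∧ Set.InjOn pairOf (S : Set (TeleE n k)) := by
  constructor
  · intro h
    refine ⟨fun q => (h q).or.elim (⟨false, ·⟩) (⟨true, ·⟩), ?_⟩
    intro e₁ h₁ e₂ h₂ heq
    obtain ⟨⟨q, b₁⟩, rfl⟩ := pairEquiv.symm.surjective e₁
    obtain ⟨⟨q', b₂⟩, rfl⟩ := pairEquiv.symm.surjective e₂
    obtain rfl : q = q' := by simpa [pairOf] using heq
    have := h q
    cases b₁ <;> cases b₂ <;> simp_all [pairEdge]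
  · rintro ⟨hmeet, hinj⟩ q
    have hne {b b'} (hb : pairEdge q b ∈ S) (hb' : pairEdge q b' ∈ S) : b = b' :=
      pairEdge_inj.1 (hinj hb hb' (by simp))
    obtain ⟨b, hb⟩ := hmeet q
    cases b
    · exact .inl ⟨hb, fun ht => Bool.false_ne_true (hne hb ht)⟩
    · exact .inr ⟨hb, fun hf => Bool.false_ne_true (hne hf hb)⟩

theorem OnePerPair.meetsPairs (h : OnePerPair S) : MeetsPairs S :=
  (onePerPair_iff_meetsPairs_and_injOn.1 h).1

theorem OnePerPair.compl (h : OnePerPair S) : OnePerPair (Finset.univ \ S) := fun q => by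
  simpa only [Finset.mem_sdiff, Finset.mem_univ, true_and, xor_not_not] using h q

theorem MeetsPairs.onePerPair (h : MeetsPairs S)
    (hcard : S.card ≤ Fintype.card (TelePair n k)) : OnePerPair S :=
  onePerPair_iff_meetsPairs_and_injOn.2 ⟨h,
    Finset.injOn_of_surjOn_of_card_le (t := Finset.univ) pairOf
      (fun _ _ => Finset.mem_coe.2 (Finset.mem_univ _))
      (fun q _ => let ⟨b, hb⟩ := h q; ⟨_, hb, pairOf_pairEdge q b⟩) hcard⟩

theorem OnePerPair.card_eq (h : OnePerPair S) : S.card = Fintype.card (TelePair n k) := by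
  obtain ⟨hmeet, hinj⟩ := onePerPair_iff_meetsPairs_and_injOn.1 h
  exact Finset.card_nbij pairOf (fun _ _ => Finset.mem_coe.2 (Finset.mem_univ _)) hinj
    (fun q _ => let ⟨b, hb⟩ := hmeet q; ⟨_, hb, pairOf_pairEdge q b⟩)

theorem reach_teleZ_of_forall_exists_teleEdge_mem (hS : ∀ i : Fin n, ∃ b, teleEdge i b ∈ S)
    (i : Fin (n + 1)) :
    Relation.ReflTransGen ((teleGraph n k).AdjOnAvoid S teleC) (teleZ 0) (teleZ i) := by
  induction i using Fin.induction with
  | zero => exact .refl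
  | succ i ih =>
    obtain ⟨b, hb⟩ := hS i
    exact ih.tail
      ⟨⟨teleEdge i b, hb, ends_teleEdge i b⟩, teleZ_ne_teleC _, teleZ_ne_teleC _⟩

theorem MeetsPairs.reachOn (h : MeetsPairs S) (x y : TeleV n k) :
    (teleGraph n k).ReachOn S x y := by
  have hspine (i : Fin (n + 1)) : (teleGraph n k).ReachOn S (teleZ i) (teleZ 0) :=
    (ReachOn.of_adjOnAvoid
      (reach_teleZ_of_forall_exists_teleEdge_mem (fun i => h (.inr (.inl i))) i)).symm
  have hc : (teleGraph n k).ReachOn S teleC (teleZ 0) := by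
    obtain ⟨_ | _, hb⟩ := h (.inl ())
    · exact .single ⟨teleG, hb, ends_teleG⟩
    · exact .head ⟨teleF, hb, ends_teleF⟩ (hspine _)
  have hall : ∀ v, (teleGraph n k).ReachOn S v (teleZ 0) := by
    rintro (⟨⟩ | i | ⟨i, j⟩)
    · exact hc
    · exact hspine i
    · obtain ⟨_ | _, hb⟩ := h (.inr (.inr ⟨i, j⟩))
      · exact .head ⟨teleH i j false, hb, ends_teleH_false i j⟩ (hspine i)
      · exact .head ⟨teleH i j true, hb, ends_teleH_true i j⟩ hc
  exact (hall x).trans (hall y).symm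

theorem OnePerPair.isSpanningTree (h : OnePerPair S) : (teleGraph n k).IsSpanningTree S :=
  ⟨h.meetsPairs.reachOn, by rw [h.card_eq, card_teleV, Nat.add_sub_cancel]⟩

theorem OnePerPair.singleStepTree (h : OnePerPair S) :
    SingleStepTree (teleGraph n k) teleC (teleZ 0) (teleZ (Fin.last n)) teleF teleG S :=
  ⟨(onePerPair_iff.1 h).1,
    reach_teleZ_of_forall_exists_teleEdge_mem (fun i => h.meetsPairs (.inr (.inl i))) _⟩

/-- `z_i` and the `w_i^j` get index `i`; the value at `c` plays no role. -/
def spineIndex : TeleV n k → ℕ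
  | .inl _ => 0
  | .inr (.inl i) => i
  | .inr (.inr p) => p.1

theorem spineIndex_le_iff_of_adjOnAvoid {i : Fin n} (hfalse : teleEdge i false ∉ S)
    (htrue : teleEdge i true ∉ S) {a b : TeleV n k}
    (h : (teleGraph n k).AdjOnAvoid S teleC a b) : spineIndex a ≤ i ↔ spineIndex b ≤ i := by
  obtain ⟨⟨e, he, hab⟩, ha, hb⟩ := h
  -- Edges at `c` are excluded, `h_{i'}^j` stays at index `i'`, and only `e_i, ê_i` cross `i`.
  rcases e with (_ | _) | ⟨i', _ | _⟩ | ⟨⟨i', j⟩, _ | _⟩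
  all_goals
    simp only [teleGraph, Bool.false_eq_true, if_true, if_false, Sym2.eq_iff] at hab
    rcases hab with ⟨rfl, rfl⟩ | ⟨rfl, rfl⟩ <;>
      simp_all [spineIndex, teleZ, teleW, teleC, teleEdge]
  all_goals
    have hne : i' ≠ i := by rintro rfl; contradiction
    omega

theorem exists_teleEdge_mem_of_reach (h : Relation.ReflTransGen
      ((teleGraph n k).AdjOnAvoid S teleC) (teleZ 0) (teleZ (Fin.last n))) (i : Fin n) :
    ∃ b, teleEdge i b ∈ S := by
  by_contra! hS
  have hside {a b : TeleV n k}
      (hab : Relation.ReflTransGen ((teleGraph n k).AdjOnAvoid S teleC) a b) :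
      spineIndex a ≤ i ↔ spineIndex b ≤ i := by
    induction hab with
    | refl => rfl
    | tail _ hstep ih =>
      exact ih.trans (spineIndex_le_iff_of_adjOnAvoid (hS false) (hS true) hstep)
  have hlast := hside h
  simp only [spineIndex, teleZ, Fin.val_zero, Fin.val_last, zero_le, true_iff] at hlast
  omega

theorem exists_eq_teleH_of_teleW_mem_ends {i : Fin (n + 1)} {j : Fin (k i)} {e : TeleE n k}
    (h : teleW i j ∈ (teleGraph n k).ends e) : ∃ b, e = teleH i j b := by
  rcases e with (_ | _) | ⟨i', _ | _⟩ | ⟨⟨i', j'⟩, _ | _⟩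
  all_goals simp [teleGraph, teleW, teleZ, teleC, teleH] at h ⊢
  all_goals exact ⟨h.1.symm, h.2.symm⟩

theorem meetsPairs_of_singleStepTree (hconn : ∀ x y, (teleGraph n k).ReachOn S x y)
    (h : SingleStepTree (teleGraph n k) teleC (teleZ 0) (teleZ (Fin.last n)) teleF teleG S) :
    MeetsPairs S := by
  rintro (⟨⟩ | i | ⟨i, j⟩)
  · rcases h.1 with ⟨hf, -⟩ | ⟨hg, -⟩
    exacts [⟨true, hf⟩, ⟨false, hg⟩]
  · exact exists_teleEdge_mem_of_reach h.2 i
  · obtain ⟨e, he, hw⟩ := (hconn (teleW i j) teleC).exists_mem_ends (teleW_ne_teleC i j)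
    obtain ⟨b, rfl⟩ := exists_eq_teleH_of_teleW_mem_ends hw
    exact ⟨b, he⟩

end Telescope

/-- a spanning tree of the telescope graph is a single-step tree
iff it contains exactly one edge from each of the pairs `{f, g}`,
`{e_i, ê_i}` and `{h i j, ĥ i j}`; in particular the complement of every
single-step tree is again a spanning tree. -/
theorem telescope_single_step_trees (n : ℕ) (k : Fin (n + 1) → ℕ)
    (T : Finset (TeleE n k)) (hT : (teleGraph n k).IsSpanningTree T) :
    (SingleStepTree (teleGraph n k) teleC (teleZ 0) (teleZ (Fin.last n)) teleF teleG T ↔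
      (Xor' (teleF ∈ T) (teleG ∈ T) ∧
       (∀ i : Fin n, Xor' (teleEdge i false ∈ T) (teleEdge i true ∈ T)) ∧
       (∀ (i : Fin (n + 1)) (j : Fin (k i)),
         Xor' (teleH i j false ∈ T) (teleH i j true ∈ T)))) ∧
    (SingleStepTree (teleGraph n k) teleC (teleZ 0) (teleZ (Fin.last n)) teleF teleG T →
      (teleGraph n k).IsSpanningTree (Finset.univ \ T)) := by
  obtain ⟨hconn, hcard⟩ := hT
  have hiff : SingleStepTree (teleGraph n k) teleC (teleZ 0) (teleZ (Fin.last n)) teleF teleG T ↔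
      Telescope.OnePerPair T := by
    refine ⟨fun h => ?_, Telescope.OnePerPair.singleStepTree⟩
    refine (Telescope.meetsPairs_of_singleStepTree hconn h).onePerPair ?_
    rw [hcard, Telescope.card_teleV, Nat.add_sub_cancel]
  exact ⟨hiff.trans Telescope.onePerPair_iff, fun h => (hiff.1 h).compl.isSpanningTree⟩

end
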